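/- Let V be a real reflexive Banach space and A, B : V → V* both pseudo-monotone and bounded on weakly convergent sequences in the sense that (Axₙ) and (Bxₙ) are bounded whenever (xₙ) is weakly convergent. Then A + B is pseudo-monotone. -/

import Mathlib

open Filter Topology

/-- Pseudo-monotonicity of an operator from `V` to its dual. -/
def PseudoMonotone {V : Type*} [NormedAddCommGroup V] [NormedSpace ℝ V]
    (A : V → (V →L[ℝ] ℝ)) : Prop :=
  ∀ (x : ℕ → V) (x₀ : V),
    (∀ f : V →L[ℝ] ℝ, Tendsto (fun n => f (x n)) atTop (𝓝 (f x₀))) →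
    limsup (fun n => A (x n) (x n - x₀)) atTop ≤ 0 →
    ∀ y : V, A x₀ (x₀ - y) ≤ liminf (fun n => A (x n) (x n - y)) atTop

private lemma bdd_le {u : ℕ → ℝ} {K : ℝ} (h : ∀ n, |u n| ≤ K) :
    IsBoundedUnder (· ≤ ·) (atTop : Filter ℕ) u :=
  Filter.isBoundedUnder_of ⟨K, fun n => (abs_le.1 (h n)).2⟩

private lemma bdd_ge {u : ℕ → ℝ} {K : ℝ} (h : ∀ n, |u n| ≤ K) :
    IsBoundedUnder (· ≥ ·) (atTop : Filter ℕ) u :=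
  Filter.isBoundedUnder_of ⟨-K, fun n => (abs_le.1 (h n)).1⟩

/-- A weakly convergent sequence is norm-bounded (uniform boundedness principle). -/
private lemma weak_bdd {V : Type*} [NormedAddCommGroup V] [NormedSpace ℝ V]
    (x : ℕ → V) (x₀ : V)
    (hw : ∀ f : V →L[ℝ] ℝ, Tendsto (fun n => f (x n)) atTop (𝓝 (f x₀))) :
    ∃ M : ℝ, ∀ n, ‖x n‖ ≤ M := by
  have hpt : ∀ f : StrongDual ℝ V, ∃ C, ∀ n,
      ‖(NormedSpace.inclusionInDoubleDual ℝ V (x n)) f‖ ≤ C := by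
    intro f
    obtain ⟨C, hC⟩ := ((hw f).norm).bddAbove_range
    exact ⟨C, fun n => hC ⟨n, rfl⟩⟩
  obtain ⟨C', hC'⟩ := banach_steinhaus
    (g := fun n => NormedSpace.inclusionInDoubleDual ℝ V (x n)) hpt
  refine ⟨C', fun n => ?_⟩
  have h := (NormedSpace.inclusionInDoubleDualLi ℝ (E := V)).norm_map (x n)
  rw [← h]
  exact hC' n

/-- Key step: extraction of a subsequence where `a` attains its limsup. -/
private lemma key (a b : ℕ → ℝ) (Ka Kb : ℝ)
    (hKa : ∀ n, |a n| ≤ Ka) (hKb : ∀ n, |b n| ≤ Kb)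
    (hsum : limsup (fun n => a n + b n) atTop ≤ 0)
    (hB : ∀ φ : ℕ → ℕ, StrictMono φ → limsup (fun n => b (φ n)) atTop ≤ 0 →
          0 ≤ liminf (fun n => b (φ n)) atTop) :
    limsup a atTop ≤ 0 := by
  by_contra hcon
  push_neg at hcon
  -- extract a subsequence along which `a` converges to its limsup
  have hfreq : ∀ m : ℕ, ∃ᶠ k in atTop, limsup a atTop - 1/((m : ℝ)+1) < a k := by
    intro m
    apply frequently_lt_of_lt_limsup ((bdd_ge hKa).isCoboundedUnder_le)
    have h0 : (0:ℝ) < 1/((m : ℝ)+1) := by positivity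
    linarith
  obtain ⟨φ, hφ, hφa⟩ := extraction_forall_of_frequently hfreq
  have h1 : limsup a atTop ≤ liminf (fun n => a (φ n)) atTop := by
    have hlow : Tendsto (fun m : ℕ => limsup a atTop - 1/((m : ℝ)+1)) atTop
        (𝓝 (limsup a atTop)) := by
      simpa using tendsto_const_nhds.sub (tendsto_one_div_add_atTop_nhds_zero_nat : Tendsto (fun n : ℕ => 1 / ((n : ℝ) + 1)) atTop (𝓝 0))
    rw [← hlow.liminf_eq]
    refine liminf_le_liminf (Eventually.of_forall fun n => (hφa n).le) ?_ ?_
    · refine Filter.isBoundedUnder_of ⟨limsup a atTop - 1, fun m => ?_⟩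
      have h1m : (1:ℝ) ≤ (m:ℝ) + 1 := le_add_of_nonneg_left (Nat.cast_nonneg m)
      have := (div_le_one (by positivity : (0:ℝ) < (m:ℝ)+1)).2 h1m
      simp only [ge_iff_le]
      linarith
    · exact (bdd_le fun n => hKa (φ n)).isCoboundedUnder_ge
  -- the sum along the subsequence still has nonpositive limsup
  have hs : limsup (fun n => a (φ n) + b (φ n)) atTop ≤ 0 := by
    have heq : limsup (fun n => a (φ n) + b (φ n)) atTop
        = limsup (fun n => a n + b n) (map φ atTop) := by
      rw [Filter.limsup, Filter.limsup, Filter.map_map]; rfl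
    rw [heq]
    refine le_trans (limsup_le_limsup_of_le hφ.tendsto_atTop ?_ ?_) hsum
    · exact (Filter.isBoundedUnder_of ⟨-(Ka+Kb), fun n => by
        have h1 := (abs_le.1 (hKa n)).1
        have h2 := (abs_le.1 (hKb n)).1
        simp only [ge_iff_le]; linarith⟩).isCoboundedUnder_le
    · exact Filter.isBoundedUnder_of ⟨Ka+Kb, fun n => by
        have h1 := (abs_le.1 (hKa n)).2
        have h2 := (abs_le.1 (hKb n)).2
        linarith⟩
  -- hence `b` has limsup ≤ -limsup a < 0 along the subsequence
  have h2 : limsup (fun n => b (φ n)) atTop + liminf (fun n => a (φ n)) atTop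
      ≤ limsup (fun n => a (φ n) + b (φ n)) atTop := by
    have h := le_limsup_add (f := (atTop : Filter ℕ))
      (u := fun n => b (φ n)) (v := fun n => a (φ n))
      (bdd_le fun n => hKb (φ n)) ((bdd_ge fun n => hKb (φ n)).isCoboundedUnder_le)
      (bdd_le fun n => hKa (φ n)) (bdd_ge fun n => hKa (φ n))
    have heq : (fun n => b (φ n)) + (fun n => a (φ n)) = fun n => a (φ n) + b (φ n) := by
      funext n; exact add_comm _ _
    rwa [heq] at h
  have hb0 : limsup (fun n => b (φ n)) atTop ≤ 0 := by linarith
  have h3 := hB φ hφ hb0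
  have h4 : liminf (fun n => b (φ n)) atTop ≤ limsup (fun n => b (φ n)) atTop :=
    liminf_le_limsup (bdd_le fun n => hKb (φ n)) (bdd_ge fun n => hKb (φ n))
  linarith

/-- Sum of pseudo-monotone operators is pseudo-monotone (Proposition `pseudo` (c)). -/
theorem stmt_2 {V : Type*} [NormedAddCommGroup V] [NormedSpace ℝ V]
    (hrefl : Function.Surjective (NormedSpace.inclusionInDoubleDual ℝ V))
    (A B : V → (V →L[ℝ] ℝ))
    (hA : PseudoMonotone A) (hB : PseudoMonotone B)
    (hAbdd : ∀ (x : ℕ → V) (x₀ : V),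
      (∀ f : V →L[ℝ] ℝ, Tendsto (fun n => f (x n)) atTop (𝓝 (f x₀))) →
      ∃ C : ℝ, ∀ n, ‖A (x n)‖ ≤ C)
    (hBbdd : ∀ (x : ℕ → V) (x₀ : V),
      (∀ f : V →L[ℝ] ℝ, Tendsto (fun n => f (x n)) atTop (𝓝 (f x₀))) →
      ∃ C : ℝ, ∀ n, ‖B (x n)‖ ≤ C) :
    PseudoMonotone (fun v => A v + B v) := by
  intro x x₀ hw hsum y
  obtain ⟨M, hM⟩ := weak_bdd x x₀ hw
  obtain ⟨Ca, hCa⟩ := hAbdd x x₀ hw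
  obtain ⟨Cb, hCb⟩ := hBbdd x x₀ hw
  have hbA : ∀ z : V, ∀ n, |A (x n) (x n - z)| ≤ Ca * (M + ‖z‖) := by
    intro z n
    calc |A (x n) (x n - z)| = ‖A (x n) (x n - z)‖ := rfl
      _ ≤ ‖A (x n)‖ * ‖x n - z‖ := (A (x n)).le_opNorm _
      _ ≤ Ca * (M + ‖z‖) := by
          refine mul_le_mul (hCa n) ?_ (norm_nonneg _) ((norm_nonneg _).trans (hCa n))
          exact (norm_sub_le _ _).trans (add_le_add (hM n) le_rfl)
  have hbB : ∀ z : V, ∀ n, |B (x n) (x n - z)| ≤ Cb * (M + ‖z‖) := by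
    intro z n
    calc |B (x n) (x n - z)| = ‖B (x n) (x n - z)‖ := rfl
      _ ≤ ‖B (x n)‖ * ‖x n - z‖ := (B (x n)).le_opNorm _
      _ ≤ Cb * (M + ‖z‖) := by
          refine mul_le_mul (hCb n) ?_ (norm_nonneg _) ((norm_nonneg _).trans (hCb n))
          exact (norm_sub_le _ _).trans (add_le_add (hM n) le_rfl)
  have hsum' : limsup (fun n => A (x n) (x n - x₀) + B (x n) (x n - x₀)) atTop ≤ 0 := by
    simpa [ContinuousLinearMap.add_apply] using hsum
  have hA0 : limsup (fun n => A (x n) (x n - x₀)) atTop ≤ 0 := by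
    refine key _ _ _ _ (hbA x₀) (hbB x₀) hsum' (fun φ hφ hls => ?_)
    have h := hB (fun n => x (φ n)) x₀ (fun f => (hw f).comp hφ.tendsto_atTop) hls x₀
    simpa using h
  have hB0 : limsup (fun n => B (x n) (x n - x₀)) atTop ≤ 0 := by
    have hsum'' : limsup (fun n => B (x n) (x n - x₀) + A (x n) (x n - x₀)) atTop ≤ 0 := by
      have heq : (fun n => B (x n) (x n - x₀) + A (x n) (x n - x₀))
          = (fun n => A (x n) (x n - x₀) + B (x n) (x n - x₀)) := by
        funext n; exact add_comm _ _
      rwa [heq]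
    refine key _ _ _ _ (hbB x₀) (hbA x₀) hsum'' (fun φ hφ hls => ?_)
    have h := hA (fun n => x (φ n)) x₀ (fun f => (hw f).comp hφ.tendsto_atTop) hls x₀
    simpa using h
  have hAy := hA x x₀ hw hA0 y
  have hBy := hB x x₀ hw hB0 y
  have hlift : liminf (fun n => A (x n) (x n - y)) atTop
      + liminf (fun n => B (x n) (x n - y)) atTop
      ≤ liminf (fun n => A (x n) (x n - y) + B (x n) (x n - y)) atTop := by
    exact le_liminf_add (f := (atTop : Filter ℕ))
      (u := fun n => A (x n) (x n - y)) (v := fun n => B (x n) (x n - y))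
      (bdd_ge (hbA y)) (bdd_le (hbA y)) (bdd_ge (hbB y))
      ((bdd_le (hbB y)).isCoboundedUnder_ge)
  have hgoal : A x₀ (x₀ - y) + B x₀ (x₀ - y)
      ≤ liminf (fun n => A (x n) (x n - y) + B (x n) (x n - y)) atTop :=
    le_trans (add_le_add hAy hBy) hlift
  simpa [ContinuousLinearMap.add_apply] using hgoal
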